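/- arXiv:1607.02455 — 2 statements merged into one kernel-verified Lean document; each statement's English description precedes it below -/
import Mathlib

section
/- Let u: [0,∞) → (0,∞) be continuous, strictly increasing to ∞ (hence invertible) with u(x)/u(⌊x⌋) → 1 as x → ∞, and let p, q, s be real sequences with u_n := u(n). Then for every λ ∈ (1,∞): s_n → s (V, p, q, u) if and only if s_n → s (𝒱, p, q, u, λ); in particular, the moving-average limit holds for some λ ∈ (1,∞) if and only if it holds for all λ ∈ (1,∞). -/
open Filter Finset Topology

/-- The Voronoi convolution `(a∘b)` of two sequences. -/
noncomputable def vconv (a b : ℕ → ℝ) : ℕ → ℝ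
  | 0 => a 0 * b 0
  | n + 1 => (∑ k ∈ Finset.range (n + 2), a (n + 1 - k) * b k)
      - ∑ k ∈ Finset.range (n + 1), a (n - k) * b k

/-- The Voronoi mean transform `t_n = (1/u_n) ∑_{k=0}^n p_{n-k} q_k s_k`. -/
noncomputable def vT (p q u s : ℕ → ℝ) (n : ℕ) : ℝ :=
  (1 / u n) * ∑ k ∈ Finset.range (n + 1), p (n - k) * q k * s k

/-- `w_λ(x) = u⁻¹(u(x)/λ)`, the inverse taken on `[0,∞)`. -/
noncomputable def wl (u : ℝ → ℝ) (lam x : ℝ) : ℝ :=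
  Function.invFunOn u (Set.Ici 0) (u x / lam)

/-- The Voronoi moving average
`c_x = (1/u(x)) ∑_{w_λ(x) < k ≤ x} a_k` (sum over integers `k`). -/
noncomputable def movAvg (u : ℝ → ℝ) (a : ℕ → ℝ) (lam x : ℝ) : ℝ :=
  (1 / u x) * ∑ k ∈ Finset.range (⌊x⌋₊ + 1),
    if wl u lam x < (k : ℝ) then a k else 0

/-!
With `m = ⌊w_λ(n)⌋` the moving average is a difference of two Voronoi means,
`c_n = t_n - (u_m / u_n) t_m`, because the partial sums of `p∘qs` are `u_n t_n`; and
`u(x) ∼ u(⌊x⌋)` together with `u(w_λ(n)) = u_n / λ` gives `u_m / u_n → λ⁻¹`. So `t → s` gives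
`c → (1 - λ⁻¹) s`. Conversely `|t_n - s| ≤ o(1) + ρ |t_m - s|` for some `ρ < 1`, with `m < n` and
`m → ∞`: strong induction makes `t - s` bounded, and `limsup |t - s| ≤ ρ limsup |t - s|` then
forces `t → s`.
-/

theorem sum_range_succ_vconv (a b : ℕ → ℝ) (n : ℕ) :
    ∑ k ∈ range (n + 1), vconv a b k = ∑ k ∈ range (n + 1), a (n - k) * b k := by
  induction n with
  | zero => simp [vconv]
  | succ n ih =>
    rw [sum_range_succ, ih]
    change _ + vconv a b (n + 1) = _
    rw [vconv]
    ring

theorem sum_range_succ_vconv_eq_mul_vT (p q u s : ℕ → ℝ) {n : ℕ} (hu : u n ≠ 0) :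
    ∑ k ∈ range (n + 1), vconv p (fun k => q k * s k) k = u n * vT p q u s n := by
  rw [sum_range_succ_vconv, vT, ← mul_assoc, mul_one_div_cancel hu, one_mul]
  exact sum_congr rfl fun k _ => by ring

theorem sum_range_succ_ite_lt {M : Type*} [AddCommGroup M] (a : ℕ → M) {m n : ℕ} (h : m ≤ n) :
    ∑ k ∈ range (n + 1), (if m < k then a k else 0)
      = ∑ k ∈ range (n + 1), a k - ∑ k ∈ range (m + 1), a k := by
  rw [← sum_filter, ← sum_Ico_eq_sub a (by omega : m + 1 ≤ n + 1)]
  congr 1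
  ext k
  simp only [mem_filter, mem_Ico, mem_range]
  omega

theorem movAvg_natCast_eq (u : ℝ → ℝ) (a : ℕ → ℝ) (lam : ℝ) {n : ℕ}
    (hw0 : 0 ≤ wl u lam n) (hwn : wl u lam n < n) :
    movAvg u a lam n
      = (∑ k ∈ range (n + 1), a k - ∑ k ∈ range (⌊wl u lam n⌋₊ + 1), a k) / u n := by
  have hcond : ∀ k : ℕ, wl u lam n < k ↔ ⌊wl u lam n⌋₊ < k := fun k => (Nat.floor_lt hw0).symm
  simp only [movAvg, Nat.floor_natCast, hcond]
  rw [sum_range_succ_ite_lt a ((Nat.floor_lt hw0).2 hwn).le, one_div_mul_eq_div]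

section Contraction

variable {f : ℕ → ℝ} {m : ℕ → ℕ} {ρ : ℝ}

theorem exists_forall_le_of_le_add_mul_comp {C : ℝ} (hρ0 : 0 ≤ ρ) (hρ1 : ρ < 1)
    (hle : ∀ᶠ n in atTop, m n < n ∧ f n ≤ C + ρ * f (m n)) : ∃ M, ∀ n, f n ≤ M := by
  obtain ⟨N, hN⟩ := eventually_atTop.1 hle
  obtain ⟨B, hB⟩ := ((Set.finite_lt_nat N).image f).bddAbove
  refine ⟨max B (C / (1 - ρ)), fun n => ?_⟩
  induction n using Nat.strong_induction_on with
  | _ n ih =>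
    rcases lt_or_ge n N with hn | hn
    · exact (hB ⟨n, hn, rfl⟩).trans (le_max_left _ _)
    · obtain ⟨hmn, hfn⟩ := hN n hn
      have hC : C ≤ (1 - ρ) * max B (C / (1 - ρ)) := by
        rw [← div_le_iff₀' (by linarith)]
        exact le_max_right _ _
      nlinarith [ih (m n) hmn]

theorem tendsto_zero_of_le_add_mul_comp {d : ℕ → ℝ} (hρ0 : 0 ≤ ρ) (hρ1 : ρ < 1)
    (hf : ∀ n, 0 ≤ f n) (hd : Tendsto d atTop (𝓝 0)) (hm : Tendsto m atTop atTop)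
    (hle : ∀ᶠ n in atTop, m n < n ∧ f n ≤ d n + ρ * f (m n)) :
    Tendsto f atTop (𝓝 0) := by
  have hd_le : ∀ ε > 0, ∀ᶠ n in atTop, d n ≤ ε := fun ε hε => hd.eventually (eventually_le_nhds hε)
  obtain ⟨M, hM⟩ : ∃ M, ∀ n, f n ≤ M := by
    refine exists_forall_le_of_le_add_mul_comp (m := m) (C := 1) hρ0 hρ1 ?_
    filter_upwards [hle, hd_le 1 one_pos] with n ⟨hmn, hfn⟩ hdn
    exact ⟨hmn, by linarith⟩
  have hbdd : IsBoundedUnder (· ≤ ·) atTop f := isBoundedUnder_of ⟨M, hM⟩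
  have hcobdd : IsCoboundedUnder (· ≤ ·) atTop f :=
    (isBoundedUnder_of ⟨0, hf⟩ : IsBoundedUnder (· ≥ ·) atTop f).isCoboundedUnder_le
  set L := limsup f atTop
  have hL : ∀ ε > 0, L ≤ ε + ρ * (L + ε) := fun ε hε => by
    have hlt : ∀ᶠ n in atTop, f n < L + ε := eventually_lt_of_limsup_lt (by linarith) hbdd
    refine limsup_le_of_le hcobdd ?_
    filter_upwards [hle, hd_le ε hε, hm.eventually hlt] with n ⟨_, hfn⟩ hdn hfmn
    nlinarith
  have hL1 : (1 - ρ) * L ≤ 0 := le_of_forall_pos_le_add fun ε hε => by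
    nlinarith [hL (ε / 2) (half_pos hε)]
  have hL0 : L ≤ 0 := nonpos_of_mul_nonpos_right hL1 (by linarith)
  exact tendsto_order.2 ⟨fun b hb => Eventually.of_forall fun n => hb.trans_le (hf n),
    fun b hb => eventually_lt_of_limsup_lt (hL0.trans_lt hb) hbdd⟩

end Contraction

theorem tendsto_sub_mul_comp_iff {t r : ℕ → ℝ} {m : ℕ → ℕ} {ρ s : ℝ} (hρ : ρ < 1)
    (hr0 : ∀ n, 0 ≤ r n) (hr : Tendsto r atTop (𝓝 ρ)) (hm : Tendsto m atTop atTop)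
    (hmlt : ∀ᶠ n in atTop, m n < n) :
    Tendsto (fun n => t n - r n * t (m n)) atTop (𝓝 ((1 - ρ) * s)) ↔
      Tendsto t atTop (𝓝 s) := by
  refine ⟨fun hc => ?_, fun ht => by
    simpa [sub_mul] using ht.sub (hr.mul (ht.comp hm))⟩
  have hρ0 : 0 ≤ ρ := ge_of_tendsto' hr hr0
  set d := fun n => |t n - r n * t (m n) - (1 - ρ) * s| + |r n - ρ| * |s|
  have hd : Tendsto d atTop (𝓝 0) := by
    simpa [d] using ((hc.sub_const ((1 - ρ) * s)).abs.add ((hr.sub_const ρ).abs.mul_const |s|))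
  have hrρ : ∀ᶠ n in atTop, r n ≤ (1 + ρ) / 2 := hr.eventually (eventually_le_nhds (by linarith))
  rw [tendsto_iff_norm_sub_tendsto_zero]
  refine tendsto_zero_of_le_add_mul_comp (ρ := (1 + ρ) / 2) (by linarith) (by linarith)
    (fun n => norm_nonneg _) hd hm ?_
  filter_upwards [hmlt, hrρ] with n hmn hrn
  refine ⟨hmn, ?_⟩
  calc ‖t n - s‖
      = |(t n - r n * t (m n) - (1 - ρ) * s) + (r n - ρ) * s + r n * (t (m n) - s)| := by
        rw [Real.norm_eq_abs]
        congr 1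
        ring
    _ ≤ d n + r n * ‖t (m n) - s‖ := by
        have := abs_add_three (t n - r n * t (m n) - (1 - ρ) * s) ((r n - ρ) * s)
          (r n * (t (m n) - s))
        rwa [abs_mul, abs_mul, abs_of_nonneg (hr0 n)] at this
    _ ≤ d n + (1 + ρ) / 2 * ‖t (m n) - s‖ := by gcongr

section InverseShift

variable {u : ℝ → ℝ} {lam : ℝ}

theorem eventually_wl_spec (hpos : ∀ x ≥ (0 : ℝ), 0 < u x) (hcont : ContinuousOn u (Set.Ici 0))
    (hmono : StrictMonoOn u (Set.Ici 0)) (htop : Tendsto u atTop atTop) (hl : 1 < lam) :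
    ∀ᶠ x in atTop, 0 ≤ wl u lam x ∧ u (wl u lam x) = u x / lam ∧ wl u lam x < x := by
  filter_upwards [htop.eventually_ge_atTop (lam * u 0), eventually_ge_atTop 0] with x hx hx0
  have hux := hpos x hx0
  obtain ⟨y, hy, hyx⟩ : u x / lam ∈ u '' Set.Icc 0 x :=
    intermediate_value_Icc hx0 (hcont.mono Set.Icc_subset_Ici_self)
      ⟨(le_div_iff₀ (by linarith)).2 (by linarith), div_le_self hux.le hl.le⟩
  have hex : ∃ y ∈ Set.Ici (0 : ℝ), u y = u x / lam := ⟨y, hy.1, hyx⟩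
  have hw0 : 0 ≤ wl u lam x := Function.invFunOn_mem hex
  have hw : u (wl u lam x) = u x / lam := Function.invFunOn_eq hex
  refine ⟨hw0, hw, lt_of_not_ge fun hxw => ?_⟩
  have := hmono.monotoneOn (Set.mem_Ici.2 hx0) hw0 hxw
  rw [hw] at this
  linarith [div_lt_self hux hl]

theorem tendsto_wl_atTop (hpos : ∀ x ≥ (0 : ℝ), 0 < u x) (hcont : ContinuousOn u (Set.Ici 0))
    (hmono : StrictMonoOn u (Set.Ici 0)) (htop : Tendsto u atTop atTop) (hl : 1 < lam) :
    Tendsto (wl u lam) atTop atTop := by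
  refine tendsto_atTop.2 fun b => ?_
  filter_upwards [htop.eventually_ge_atTop (lam * u (max b 0)),
    eventually_wl_spec hpos hcont hmono htop hl] with x hx ⟨hw0, hw, _⟩
  have hub : u (max b 0) ≤ u (wl u lam x) := by
    rw [hw, le_div_iff₀ (by linarith)]
    linarith
  exact (le_max_left b 0).trans ((hmono.le_iff_le (le_max_right b 0) hw0).1 hub)

theorem tendsto_u_floor_wl_div (hpos : ∀ x ≥ (0 : ℝ), 0 < u x)
    (hcont : ContinuousOn u (Set.Ici 0)) (hmono : StrictMonoOn u (Set.Ici 0))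
    (htop : Tendsto u atTop atTop) (hfloor : Tendsto (fun x : ℝ => u x / u (⌊x⌋₊ : ℝ)) atTop (𝓝 1))
    (hl : 1 < lam) :
    Tendsto (fun x => u ⌊wl u lam x⌋₊ / u x) atTop (𝓝 lam⁻¹) := by
  have h := ((hfloor.comp (tendsto_wl_atTop hpos hcont hmono htop hl)).inv₀ one_ne_zero).mul_const
    lam⁻¹
  rw [inv_one, one_mul] at h
  refine h.congr' ?_
  filter_upwards [eventually_wl_spec hpos hcont hmono htop hl, eventually_ge_atTop 0]
    with x ⟨_, hw, _⟩ hx0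
  have := (hpos x hx0).ne'
  simp only [Function.comp_apply, hw]
  field_simp

end InverseShift

theorem tendsto_vT_iff_tendsto_movAvg {u : ℝ → ℝ} (p q s : ℕ → ℝ) {sVal lam : ℝ}
    (hpos : ∀ x ≥ (0 : ℝ), 0 < u x) (hcont : ContinuousOn u (Set.Ici 0))
    (hmono : StrictMonoOn u (Set.Ici 0)) (htop : Tendsto u atTop atTop)
    (hfloor : Tendsto (fun x : ℝ => u x / u (⌊x⌋₊ : ℝ)) atTop (𝓝 1)) (hl : 1 < lam) :
    Tendsto (vT p q (fun n : ℕ => u n) s) atTop (𝓝 sVal) ↔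
      Tendsto (fun n : ℕ => movAvg u (vconv p (fun k => q k * s k)) lam n)
        atTop (𝓝 ((1 - lam⁻¹) * sVal)) := by
  have hu : ∀ n : ℕ, u n ≠ 0 := fun n => (hpos n n.cast_nonneg).ne'
  have hspec := tendsto_natCast_atTop_atTop.eventually (eventually_wl_spec hpos hcont hmono htop hl)
  rw [← tendsto_sub_mul_comp_iff (r := fun n : ℕ => u ⌊wl u lam n⌋₊ / u n)
    (m := fun n : ℕ => ⌊wl u lam n⌋₊) (inv_lt_one_of_one_lt₀ hl)
    (fun n => div_nonneg (hpos _ (Nat.cast_nonneg _)).le (hpos _ n.cast_nonneg).le)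
    ((tendsto_u_floor_wl_div hpos hcont hmono htop hfloor hl).comp tendsto_natCast_atTop_atTop)
    (tendsto_nat_floor_atTop.comp
      ((tendsto_wl_atTop hpos hcont hmono htop hl).comp tendsto_natCast_atTop_atTop))
    (hspec.mono fun n hn => (Nat.floor_lt hn.1).2 hn.2.2)]
  refine tendsto_congr' ?_
  filter_upwards [hspec] with n ⟨hw0, _, hwn⟩
  rw [movAvg_natCast_eq u _ lam hw0 hwn, sum_range_succ_vconv_eq_mul_vT p q (fun n : ℕ => u n) s
    (hu n), sum_range_succ_vconv_eq_mul_vT p q (fun n : ℕ => u n) s (hu _)]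
  field_simp [hu n]

/-- Theorem 5: for `u` continuous, strictly increasing to `∞` on `[0,∞)`
with `u(x) ∼ u(⌊x⌋)`, and any `λ ∈ (1,∞)`, `(V,p,q,u) ⇔ (𝒱,p,q,u,λ)`; in particular the
moving-average statement holds for some `λ ∈ (1,∞)` iff it holds for all such `λ`. -/
theorem voronoi_iff_movingAverage (u : ℝ → ℝ) (p q s : ℕ → ℝ) (sVal : ℝ)
    (hpos : ∀ x ≥ (0 : ℝ), 0 < u x)
    (hcont : ContinuousOn u (Set.Ici 0))
    (hmono : StrictMonoOn u (Set.Ici 0))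
    (htop : Tendsto u atTop atTop)
    (hfloor : Tendsto (fun x : ℝ => u x / u (⌊x⌋₊ : ℝ)) atTop (𝓝 1)) :
    (∀ lam : ℝ, 1 < lam →
      (Tendsto (vT p q (fun n : ℕ => u n) s) atTop (𝓝 sVal) ↔
        Tendsto (fun n : ℕ => movAvg u (vconv p (fun k => q k * s k)) lam n)
          atTop (𝓝 ((1 - lam⁻¹) * sVal)))) ∧
    ((∃ lam : ℝ, 1 < lam ∧
        Tendsto (fun n : ℕ => movAvg u (vconv p (fun k => q k * s k)) lam n)
          atTop (𝓝 ((1 - lam⁻¹) * sVal))) ↔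
      (∀ lam : ℝ, 1 < lam →
        Tendsto (fun n : ℕ => movAvg u (vconv p (fun k => q k * s k)) lam n)
          atTop (𝓝 ((1 - lam⁻¹) * sVal)))) := by
  have key := fun lam (hl : 1 < lam) =>
    tendsto_vT_iff_tendsto_movAvg p q s (sVal := sVal) hpos hcont hmono htop hfloor hl
  exact ⟨key, fun ⟨lam, hl, h⟩ lam' hl' => (key lam' hl').1 ((key lam hl).2 h),
    fun h => ⟨2, one_lt_two, h 2 one_lt_two⟩⟩
end

section
/- Let p, q, u, s be real sequences and suppose: v_n > 0 for all n; v_n = O(1/n); u_n → ∞ as n → ∞; the power series D(x) := ∑_{n=0}^∞ v_n xⁿ has radius of convergence 1; and (p∘qs)_n/v_n − (p∘qs)_{n−1}/v_{n−1} = o(v_n/u_n) as n → ∞. If N(x)/D(x) → s as x → 1−, where N(x) := ∑_{n=0}^∞ (p∘qs)_n xⁿ, then (p∘qs)_n/v_n → s as n → ∞. -/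
open Filter Finset Topology Asymptotics

/-- Increments: `v_0 = u_0`, `v_n = u_n - u_{n-1}` for `n ≥ 1`. -/
noncomputable def inc (u : ℕ → ℝ) : ℕ → ℝ
  | 0 => u 0
  | n + 1 => u (n + 1) - u n

/-!
Put `c_n := (p∘qs)_n / v_n`, so that `N(x) / D(x)` is the weighted Abel mean `abelMean v c x`,
and evaluate it at `x_n := 1 - 1/(2n)`. Then
`c_n - N(x_n)/D(x_n) = ∑ₖ (c_n - c_k) v_k x_nᵏ / D(x_n)` and `D(x_n) ≥ u_n x_nⁿ ≥ u_n / 2` by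
Bernoulli's inequality. For `k ≤ n`, summation by parts
bounds `∑_{k ≤ n} v_k |c_n - c_k|` by `∑_{i < n} u_i |c_{i+1} - c_i|`, which is `o(u_n)` because
its terms are `o(v_{i+1})` and `∑_{i < n} v_{i+1} = u_n - u_0 → ∞`. For `k > n`, `v_k = O(1/n)`
and `|c_k - c_n| = O(k/n)` while `∑ₖ k x_nᵏ ≤ 4n²`, so the tail is `O(1) = o(u_n)`. Hence
`c_n - N(x_n)/D(x_n) → 0`, while `N(x_n)/D(x_n) → s`.
-/

noncomputable def abelMean (v c : ℕ → ℝ) (x : ℝ) : ℝ :=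
  (∑' k, c k * v k * x ^ k) / ∑' k, v k * x ^ k

noncomputable def abelPoint (n : ℕ) : ℝ := 1 - 1 / (2 * n)

theorem tendsto_abelPoint : Tendsto abelPoint atTop (𝓝[<] 1) := by
  refine tendsto_nhdsWithin_iff.2 ⟨?_, (eventually_gt_atTop 0).mono fun n hn => ?_⟩
  · change Tendsto (fun n : ℕ => 1 - 1 / (2 * (n : ℝ))) atTop (𝓝 1)
    simpa [mul_comm] using (tendsto_inv_atTop_zero.comp
      (tendsto_natCast_atTop_atTop.const_mul_atTop two_pos)).const_sub (1 : ℝ)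
  · have : (0 : ℝ) < n := Nat.cast_pos.2 hn
    simp only [abelPoint, Set.mem_Iio]
    linarith [show 0 < 1 / (2 * (n : ℝ)) by positivity]

theorem one_sub_abelPoint (n : ℕ) : 1 - abelPoint n = 1 / (2 * n) := by
  simp [abelPoint]

theorem abelPoint_pos {n : ℕ} (hn : n ≠ 0) : 0 < abelPoint n := by
  have : (1 : ℝ) ≤ n := Nat.one_le_cast.2 (Nat.one_le_iff_ne_zero.2 hn)
  have : 1 / (2 * (n : ℝ)) < 1 := by rw [div_lt_one (by positivity)]; linarith
  simp only [abelPoint]; linarith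

theorem abelPoint_lt_one {n : ℕ} (hn : n ≠ 0) : abelPoint n < 1 := by
  have : (0 : ℝ) < n := Nat.cast_pos.2 (Nat.pos_of_ne_zero hn)
  simp only [abelPoint]; linarith [show 0 < 1 / (2 * (n : ℝ)) by positivity]

theorem half_le_abelPoint_pow (n : ℕ) : 1 / 2 ≤ abelPoint n ^ n := by
  rcases n.eq_zero_or_pos with rfl | hn
  · norm_num
  have : (1 : ℝ) ≤ n := Nat.one_le_cast.2 hn
  calc (1 : ℝ) / 2 = 1 + n * -(1 / (2 * n)) := by field_simp; ring
    _ ≤ abelPoint n ^ n := by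
      rw [abelPoint, sub_eq_add_neg]
      refine one_add_mul_le_pow ?_ n
      have : 1 / (2 * (n : ℝ)) ≤ 1 := by rw [div_le_one (by positivity)]; linarith
      linarith

theorem summable_tail_and_tsum_tail_le {v c : ℕ → ℝ} {n : ℕ} {x C β : ℝ} (hx0 : 0 ≤ x)
    (hx1 : x < 1) (hv0 : ∀ k, 0 ≤ v k) (hv : ∀ k, n < k → v k ≤ C)
    (hc : ∀ k, n < k → |c k - c n| ≤ β * k) :
    Summable (fun m => v (m + (n + 1)) * x ^ (m + (n + 1)) * |c (m + (n + 1)) - c n|) ∧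
      ∑' m, v (m + (n + 1)) * x ^ (m + (n + 1)) * |c (m + (n + 1)) - c n| ≤
        C * β * (x / (1 - x) ^ 2) := by
  have hx : ‖x‖ < 1 := by rwa [Real.norm_of_nonneg hx0]
  have hC : 0 ≤ C := (hv0 _).trans (hv _ n.lt_succ_self)
  have hβ : 0 ≤ β := nonneg_of_mul_nonneg_left
    ((abs_nonneg _).trans (hc _ n.lt_succ_self)) (by positivity : (0 : ℝ) < (n + 1 : ℕ))
  set g : ℕ → ℝ := fun k => C * β * (k * x ^ k)
  have hg : Summable g :=
    ((summable_pow_mul_geometric_of_norm_lt_one 1 hx).mul_left (C * β)).congr fun k => by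
      simp [g]
  have hg0 : ∀ k, 0 ≤ g k := fun k => by positivity
  have hle : ∀ m, v (m + (n + 1)) * x ^ (m + (n + 1)) * |c (m + (n + 1)) - c n| ≤
      g (m + (n + 1)) := fun m => by
    calc _ ≤ C * x ^ (m + (n + 1)) * (β * (m + (n + 1) : ℕ)) := by
          gcongr
          exacts [hv _ (by omega), hc _ (by omega)]
      _ = g (m + (n + 1)) := by simp only [g]; ring
  have hg' : Summable fun m => g (m + (n + 1)) := (summable_nat_add_iff _).2 hg
  have hT : Summable fun m => v (m + (n + 1)) * x ^ (m + (n + 1)) * |c (m + (n + 1)) - c n| :=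
    .of_nonneg_of_le (fun m => mul_nonneg (mul_nonneg (hv0 _) (pow_nonneg hx0 _)) (abs_nonneg _))
      hle hg'
  refine ⟨hT, ?_⟩
  calc _ ≤ ∑' m, g (m + (n + 1)) := hT.tsum_le_tsum hle hg'
    _ ≤ ∑' k, g k := tsum_comp_le_tsum_of_inj hg hg0 (add_left_injective (n + 1))
    _ = C * β * (x / (1 - x) ^ 2) := by
        rw [tsum_mul_left, tsum_coe_mul_geometric_of_norm_lt_one hx]

theorem abs_mul_tsum_sub_tsum_le {v c : ℕ → ℝ} {x : ℝ} {n : ℕ} (hx0 : 0 ≤ x) (hx1 : x ≤ 1)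
    (hv0 : ∀ k, 0 ≤ v k) (hS : Summable fun k => v k * x ^ k)
    (hT : Summable fun m => v (m + (n + 1)) * x ^ (m + (n + 1)) * |c (m + (n + 1)) - c n|) :
    |c n * ∑' k, v k * x ^ k - ∑' k, c k * v k * x ^ k| ≤
      ∑ k ∈ range (n + 1), v k * |c n - c k| +
        ∑' m, v (m + (n + 1)) * x ^ (m + (n + 1)) * |c (m + (n + 1)) - c n| := by
  have hw : ∀ k, 0 ≤ v k * x ^ k := fun k => mul_nonneg (hv0 k) (pow_nonneg hx0 k)
  set e : ℕ → ℝ := fun k => v k * x ^ k * |c k - c n|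
  have he : Summable e := (summable_nat_add_iff (n + 1)).1 hT
  have hnorm : ∀ k, ‖(c n - c k) * (v k * x ^ k)‖ = e k := fun k => by
    rw [Real.norm_eq_abs, abs_mul, abs_of_nonneg (hw k), abs_sub_comm, mul_comm]
  have hd : Summable fun k => (c n - c k) * (v k * x ^ k) :=
    he.of_norm_bounded fun k => (hnorm k).le
  have hdiff : c n * ∑' k, v k * x ^ k - ∑' k, c k * v k * x ^ k =
      ∑' k, (c n - c k) * (v k * x ^ k) := by
    have ha : Summable fun k => c k * v k * x ^ k :=
      ((hS.mul_left (c n)).sub hd).congr fun k => by ring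
    rw [← tsum_mul_left, ← Summable.tsum_sub (hS.mul_left _) ha]
    exact tsum_congr fun k => by ring
  have hhead : ∑ k ∈ range (n + 1), e k ≤ ∑ k ∈ range (n + 1), v k * |c n - c k| :=
    sum_le_sum fun k _ => by
      rw [abs_sub_comm]
      show v k * x ^ k * _ ≤ _
      rw [mul_right_comm]
      exact mul_le_of_le_one_right (mul_nonneg (hv0 k) (abs_nonneg _)) (pow_le_one₀ hx0 hx1)
  calc _ = ‖∑' k, (c n - c k) * (v k * x ^ k)‖ := by rw [hdiff, Real.norm_eq_abs]
    _ ≤ ∑' k, e k := (norm_tsum_le_tsum_norm (he.congr fun k => (hnorm k).symm)).trans_eq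
        (tsum_congr hnorm)
    _ = ∑ k ∈ range (n + 1), e k + ∑' m, e (m + (n + 1)) := (he.sum_add_tsum_nat_add _).symm
    _ ≤ _ := by gcongr

section Increments

variable {u : ℕ → ℝ}

theorem sum_range_succ_inc (u : ℕ → ℝ) (n : ℕ) : ∑ k ∈ range (n + 1), inc u k = u n := by
  induction n with
  | zero => simp [inc]
  | succ n ih => rw [sum_range_succ, ih, inc]; ring

theorem pos_of_forall_inc_pos (hv : ∀ n, 0 < inc u n) (n : ℕ) : 0 < u n :=
  sum_range_succ_inc u n ▸ sum_pos (fun k _ => hv k) nonempty_range_add_one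

theorem monotone_of_forall_inc_pos (hv : ∀ n, 0 < inc u n) : Monotone u :=
  monotone_nat_of_le_succ fun n => sub_nonneg.1 (hv (n + 1)).le

theorem sum_inc_mul_abs_sub_le (hv : ∀ n, 0 ≤ inc u n) (c : ℕ → ℝ) (n : ℕ) :
    ∑ k ∈ range (n + 1), inc u k * |c n - c k| ≤ ∑ i ∈ range n, u i * |c (i + 1) - c i| := by
  induction n with
  | zero => simp
  | succ n ih =>
    calc ∑ k ∈ range (n + 2), inc u k * |c (n + 1) - c k|
        = ∑ k ∈ range (n + 1), inc u k * |c (n + 1) - c k| := by simp [sum_range_succ _ (n + 1)]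
      _ ≤ ∑ k ∈ range (n + 1), inc u k * (|c (n + 1) - c n| + |c n - c k|) :=
          sum_le_sum fun k _ => mul_le_mul_of_nonneg_left (abs_sub_le _ _ _) (hv k)
      _ = u n * |c (n + 1) - c n| + ∑ k ∈ range (n + 1), inc u k * |c n - c k| := by
          simp only [mul_add, sum_add_distrib, ← sum_mul, sum_range_succ_inc]
      _ ≤ ∑ i ∈ range (n + 1), u i * |c (i + 1) - c i| := by
          linarith [sum_range_succ (fun i => u i * |c (i + 1) - c i|) n]

theorem isLittleO_sum_inc_mul_abs_sub {c : ℕ → ℝ} (hv : ∀ n, 0 < inc u n)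
    (hu : Tendsto u atTop atTop)
    (hc : (fun n => c (n + 1) - c n) =o[atTop] fun n => inc u (n + 1) / u (n + 1)) :
    (fun n => ∑ k ∈ range (n + 1), inc u k * |c n - c k|) =o[atTop] u := by
  have hu0 := pos_of_forall_inc_pos hv
  have hsum : ∀ n, ∑ i ∈ range n, inc u (i + 1) = u n - u 0 := fun n => sum_range_sub u n
  have hstep : (fun i => u i * |c (i + 1) - c i|) =o[atTop] fun i => inc u (i + 1) := by
    refine IsLittleO.of_bound fun ε hε => (hc.bound hε).mono fun i hi => ?_
    have hui : u i ≤ u (i + 1) := monotone_of_forall_inc_pos hv i.le_succ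
    simp only [Real.norm_eq_abs, abs_div, abs_of_pos (hv _), abs_of_pos (hu0 _), abs_mul,
      abs_abs] at hi ⊢
    calc u i * |c (i + 1) - c i| ≤ u (i + 1) * |c (i + 1) - c i| := by gcongr
      _ ≤ u (i + 1) * (ε * (inc u (i + 1) / u (i + 1))) := by gcongr; exact (hu0 _).le
      _ = ε * inc u (i + 1) := by field_simp [(hu0 (i + 1)).ne']
  have hpartial := hstep.sum_range (fun i => (hv (i + 1)).le)
    (by simpa only [hsum, sub_eq_add_neg] using tendsto_atTop_add_const_right _ (-u 0) hu)
  simp only [hsum] at hpartial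
  refine (IsBigO.of_bound' (Eventually.of_forall fun n => ?_)).trans_isLittleO
    (hpartial.trans_isBigO (IsBigO.of_bound' (Eventually.of_forall fun n => ?_)))
  · rw [Real.norm_of_nonneg (sum_nonneg fun k _ => mul_nonneg (hv k).le (abs_nonneg _))]
    exact (sum_inc_mul_abs_sub_le (fun k => (hv k).le) c n).trans (le_abs_self _)
  · rw [Real.norm_eq_abs, Real.norm_eq_abs, abs_of_pos (hu0 n), abs_le]
    constructor <;> linarith [hu0 0, monotone_of_forall_inc_pos hv n.zero_le]

theorem mul_pow_le_tsum_inc_mul_pow (hv : ∀ n, 0 ≤ inc u n) {x : ℝ} (hx0 : 0 ≤ x) (hx1 : x ≤ 1)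
    (hS : Summable fun k => inc u k * x ^ k) (n : ℕ) : u n * x ^ n ≤ ∑' k, inc u k * x ^ k :=
  calc u n * x ^ n = ∑ k ∈ range (n + 1), inc u k * x ^ n := by rw [← sum_mul, sum_range_succ_inc]
    _ ≤ ∑ k ∈ range (n + 1), inc u k * x ^ k := sum_le_sum fun k hk =>
        mul_le_mul_of_nonneg_left
          (pow_le_pow_of_le_one hx0 hx1 (Nat.lt_succ_iff.1 (mem_range.1 hk))) (hv k)
    _ ≤ ∑' k, inc u k * x ^ k := hS.sum_le_tsum _ fun k _ => mul_nonneg (hv k) (pow_nonneg hx0 k)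

theorem abs_sub_abelMean_le {c : ℕ → ℝ} {x : ℝ} {n : ℕ} (hv : ∀ n, 0 < inc u n) (hx0 : 0 < x)
    (hx1 : x ≤ 1) (hS : Summable fun k => inc u k * x ^ k)
    (hT : Summable fun m =>
      inc u (m + (n + 1)) * x ^ (m + (n + 1)) * |c (m + (n + 1)) - c n|) :
    |c n - abelMean (inc u) c x| ≤
      (∑ k ∈ range (n + 1), inc u k * |c n - c k| +
        ∑' m, inc u (m + (n + 1)) * x ^ (m + (n + 1)) * |c (m + (n + 1)) - c n|) /
        (u n * x ^ n) := by
  have hv0 : ∀ k, 0 ≤ inc u k := fun k => (hv k).le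
  have hD : u n * x ^ n ≤ ∑' k, inc u k * x ^ k :=
    mul_pow_le_tsum_inc_mul_pow hv0 hx0.le hx1 hS n
  have hun : 0 < u n * x ^ n := mul_pos (pos_of_forall_inc_pos hv n) (pow_pos hx0 n)
  have hE := abs_mul_tsum_sub_tsum_le hx0.le hx1 hv0 hS hT
  have hsub : c n - abelMean (inc u) c x =
      (c n * ∑' k, inc u k * x ^ k - ∑' k, c k * inc u k * x ^ k) / ∑' k, inc u k * x ^ k := by
    rw [abelMean, sub_div, mul_div_cancel_right₀ _ (hun.trans_le hD).ne']
  rw [hsub, abs_div, abs_of_pos (hun.trans_le hD)]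
  exact div_le_div₀ ((abs_nonneg _).trans hE) hE hun hD

theorem exists_inc_le_and_abs_sub_le {c : ℕ → ℝ} (hv : ∀ n, 0 < inc u n)
    (hvO : inc u =O[atTop] fun n : ℕ => 1 / (n : ℝ))
    (hc : (fun n => c (n + 1) - c n) =o[atTop] fun n => inc u (n + 1) / u (n + 1)) :
    ∃ C > 0, ∀ᶠ n in atTop, ∀ k, n < k → inc u k ≤ C / n ∧ |c k - c n| ≤ C / (u 0 * n) * k := by
  have hu0 := pos_of_forall_inc_pos hv
  obtain ⟨C, hC, hCv⟩ := hvO.exists_pos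
  obtain ⟨N, hN⟩ := eventually_atTop.1 (hCv.bound.and (hc.bound one_pos))
  refine ⟨C, hC, ?_⟩
  filter_upwards [eventually_ge_atTop (max N 1)] with n hn
  have hn1 : (1 : ℝ) ≤ n := Nat.one_le_cast.2 (le_of_max_le_right hn)
  have hinc : ∀ j, n ≤ j → inc u j ≤ C / n := fun j hj => by
    have hjR : (n : ℝ) ≤ j := Nat.cast_le.2 hj
    have := (hN j ((le_of_max_le_left hn).trans hj)).1
    rw [Real.norm_of_nonneg (hv j).le, Real.norm_of_nonneg (by positivity), ← div_eq_mul_one_div]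
      at this
    exact this.trans (div_le_div_of_nonneg_left hC.le (by linarith) hjR)
  intro k hk
  refine ⟨hinc k hk.le, ?_⟩
  have hsum := dist_le_Ico_sum_of_dist_le (f := c) hk.le (d := fun _ => C / (u 0 * n))
    fun {i} hi _ => by
      have := (hN i ((le_of_max_le_left hn).trans hi)).2
      rw [one_mul, Real.norm_eq_abs, Real.norm_of_nonneg (div_nonneg (hv _).le (hu0 _).le)]
        at this
      rw [Real.dist_eq, abs_sub_comm]
      calc _ ≤ inc u (i + 1) / u (i + 1) := this
        _ ≤ inc u (i + 1) / u 0 :=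
            div_le_div_of_nonneg_left (hv _).le (hu0 0)
              (monotone_of_forall_inc_pos hv (Nat.zero_le _))
        _ ≤ C / n / u 0 := div_le_div_of_nonneg_right (hinc _ (by omega)) (hu0 0).le
        _ = C / (u 0 * n) := by rw [div_div, mul_comm]
  rw [sum_const, Nat.card_Ico, nsmul_eq_mul, Real.dist_eq, abs_sub_comm] at hsum
  refine hsum.trans ?_
  rw [mul_comm]
  gcongr
  · exact (div_pos hC (mul_pos (hu0 0) (by linarith))).le
  · exact_mod_cast Nat.sub_le k n

theorem tendsto_sub_abelMean_abelPoint {c : ℕ → ℝ} (hv : ∀ n, 0 < inc u n)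
    (hvO : inc u =O[atTop] fun n : ℕ => 1 / (n : ℝ)) (hu : Tendsto u atTop atTop)
    (hD : ∀ x : ℝ, |x| < 1 → Summable fun n => inc u n * x ^ n)
    (hc : (fun n => c (n + 1) - c n) =o[atTop] fun n => inc u (n + 1) / u (n + 1)) :
    Tendsto (fun n => c n - abelMean (inc u) c (abelPoint n)) atTop (𝓝 0) := by
  obtain ⟨C, hC, hbounds⟩ := exists_inc_le_and_abs_sub_le hv hvO hc
  have hu0 := pos_of_forall_inc_pos hv
  set H := fun n => ∑ k ∈ range (n + 1), inc u k * |c n - c k|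
  set K := 4 * C * (C / u 0)
  have hK : 0 ≤ K := by have := hu0 0; positivity
  have hlim : Tendsto (fun n => 2 * (H n / u n + K / u n)) atTop (𝓝 0) := by
    simpa using ((isLittleO_sum_inc_mul_abs_sub hv hu hc).tendsto_div_nhds_zero.add
      (tendsto_const_nhds (x := K).div_atTop hu)).const_mul 2
  refine squeeze_zero_norm' ?_ hlim
  filter_upwards [hbounds, eventually_gt_atTop 0] with n hn hn0
  have hnR : (0 : ℝ) < n := Nat.cast_pos.2 hn0
  set x := abelPoint n
  have hx0 : 0 < x := abelPoint_pos hn0.ne'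
  have hx1 : x < 1 := abelPoint_lt_one hn0.ne'
  have hS := hD x (by rwa [abs_of_pos hx0])
  obtain ⟨hT, hTle⟩ := summable_tail_and_tsum_tail_le hx0.le hx1 (fun k => (hv k).le)
    (fun k hk => (hn k hk).1) (c := c) (β := C / (u 0 * n)) (fun k hk => (hn k hk).2)
  have hTK : C / n * (C / (u 0 * n)) * (x / (1 - x) ^ 2) ≤ K := by
    rw [one_sub_abelPoint]
    calc _ = K * x := by field_simp; ring
      _ ≤ K := mul_le_of_le_one_right hK hx1.le
  have hH0 : 0 ≤ H n := sum_nonneg fun k _ => mul_nonneg (hv k).le (abs_nonneg _)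
  calc ‖c n - abelMean (inc u) c x‖
      ≤ (H n + _) / (u n * x ^ n) := abs_sub_abelMean_le hv hx0 hx1.le hS hT
    _ ≤ (H n + K) / (u n * (1 / 2)) :=
        div_le_div₀ (add_nonneg hH0 hK) (by linarith) (by linarith [hu0 n])
          (mul_le_mul_of_nonneg_left (half_le_abelPoint_pow n) (hu0 n).le)
    _ = 2 * (H n / u n + K / u n) := by field_simp

theorem tendsto_of_tendsto_abelMean {c : ℕ → ℝ} {s : ℝ} (hv : ∀ n, 0 < inc u n)
    (hvO : inc u =O[atTop] fun n : ℕ => 1 / (n : ℝ)) (hu : Tendsto u atTop atTop)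
    (hD : ∀ x : ℝ, |x| < 1 → Summable fun n => inc u n * x ^ n)
    (hc : (fun n => c (n + 1) - c n) =o[atTop] fun n => inc u (n + 1) / u (n + 1))
    (hA : Tendsto (abelMean (inc u) c) (𝓝[<] 1) (𝓝 s)) :
    Tendsto c atTop (𝓝 s) := by
  simpa using (tendsto_sub_abelMean_abelPoint hv hvO hu hD hc).add (hA.comp tendsto_abelPoint)

end Increments

theorem powerSeries_to_ratio_littleO_general (p q u s : ℕ → ℝ) (sVal : ℝ)
    (hv_pos : ∀ n, 0 < inc u n)
    (hvO : (fun n => inc u n) =O[atTop] (fun n : ℕ => 1 / (n : ℝ)))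
    (hu_top : Tendsto u atTop atTop)
    (hconv : ∀ x : ℝ, |x| < 1 → Summable fun n => inc u n * x ^ n)
    (hlittle : (fun n => vconv p (fun k => q k * s k) n / inc u n -
        vconv p (fun k => q k * s k) (n - 1) / inc u (n - 1))
      =o[atTop] (fun n => inc u n / u n))
    (hA : Tendsto (fun x : ℝ =>
        (∑' n : ℕ, vconv p (fun k => q k * s k) n * x ^ n) /
          ∑' n : ℕ, inc u n * x ^ n)
      (nhdsWithin 1 (Set.Iio 1)) (𝓝 sVal)) :
    Tendsto (fun n => vconv p (fun k => q k * s k) n / inc u n) atTop (𝓝 sVal) := by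
  set a := vconv p (fun k => q k * s k)
  have ha : ∀ k, a k / inc u k * inc u k = a k := fun k => div_mul_cancel₀ _ (hv_pos k).ne'
  refine tendsto_of_tendsto_abelMean hv_pos hvO hu_top hconv ?_ ?_
  · simpa [Function.comp_def] using hlittle.comp_tendsto (tendsto_add_atTop_nat 1)
  · exact hA.congr fun x => by simp only [abelMean, ha]

/-- Theorem 9(v): if `v_n > 0`, `v_n = O(1/n)`, `u_n → ∞`, `D(x)` has
radius of convergence `1`, and the differences of `(p∘qs)_n/v_n` are `o(v_n/u_n)`, then
`N(x)/D(x) → s (x → 1⁻)` implies `(p∘qs)_n/v_n → s`. -/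
theorem powerSeries_to_ratio_littleO (p q u s : ℕ → ℝ) (sVal : ℝ)
    (hv_pos : ∀ n, 0 < inc u n)
    (hvO : (fun n => inc u n) =O[atTop] (fun n : ℕ => 1 / (n : ℝ)))
    (hu_top : Tendsto u atTop atTop)
    (hconv : ∀ x : ℝ, |x| < 1 → Summable fun n => inc u n * x ^ n)
    (hdiv : ∀ x : ℝ, 1 < |x| → ¬ Summable fun n => inc u n * x ^ n)
    (hlittle : (fun n => vconv p (fun k => q k * s k) n / inc u n -
        vconv p (fun k => q k * s k) (n - 1) / inc u (n - 1))
      =o[atTop] (fun n => inc u n / u n))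
    (hA : Tendsto (fun x : ℝ =>
        (∑' n : ℕ, vconv p (fun k => q k * s k) n * x ^ n) /
          ∑' n : ℕ, inc u n * x ^ n)
      (nhdsWithin 1 (Set.Iio 1)) (𝓝 sVal)) :
    Tendsto (fun n => vconv p (fun k => q k * s k) n / inc u n) atTop (𝓝 sVal) :=
  powerSeries_to_ratio_littleO_general p q u s sVal hv_pos hvO hu_top hconv hlittle hA
end
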